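/- Let n, l, m be positive integers and let R ∈ ℝ^{(n·l)×(n·m)} be an arbitrary matrix. Define X* = (1/n) · Σ_{k=0}^{n−1} (Ω_n^k ⊗ I_l)ᵀ · R · (Ω_n^k ⊗ I_m). Then X* is block-circulant of order n with l×m blocks, and X* minimizes the Frobenius-norm distance to R over all block-circulant matrices: for every block-circulant X ∈ BC(n,l,m), ‖X* − R‖_F ≤ ‖X − R‖_F. -/

import Mathlib

open Matrix Kronecker

/-- The cyclic shift permutation matrix `Ω_n` with `(Ω_n)_{i,j} = 1` iff `j ≡ i+1 (mod n)`. -/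
def cyclicShift (n : ℕ) : Matrix (Fin n) (Fin n) ℝ :=
  Matrix.of fun i j => if (j : ℕ) = ((i : ℕ) + 1) % n then 1 else 0

/-- A block matrix is block-circulant of order `n` with `p × m` blocks if
`B = Σ_{k=0}^{n−1} Ω_n^k ⊗ b_k` for some blocks `b_k`. -/
def IsBlockCirculant {n p m : ℕ} (B : Matrix (Fin n × Fin p) (Fin n × Fin m) ℝ) : Prop :=
  ∃ b : Fin n → Matrix (Fin p) (Fin m) ℝ,
    B = ∑ k : Fin n, (cyclicShift n ^ (k : ℕ)) ⊗ₖ b k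

/-- The Frobenius norm `‖A‖_F = √(Σ_{i,j} a_{ij}²)`. -/
noncomputable def frobNorm {α β : Type*} [Fintype α] [Fintype β] (A : Matrix α β ℝ) : ℝ :=
  Real.sqrt (∑ i, ∑ j, (A i j) ^ 2)

/-!
Conjugating by `Ω_n^k ⊗ I` shifts all block indices by `k`, so the `(i, j)` block of `X*` is the
mean of the blocks `R_{s, s+d}` of `R` along the cyclic block diagonal `d = j - i`; in particular
`X*` is block-circulant. A block-circulant matrix is constant along each such diagonal, and on
each diagonal the mean minimizes the sum of squared deviations, so the Frobenius distances compare
diagonal by diagonal.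
-/

section CyclicShift

open Fin.NatCast

variable {n : ℕ} [NeZero n]

lemma cyclicShift_apply (i j : Fin n) : cyclicShift n i j = if i + 1 = j then 1 else 0 := by
  simp [cyclicShift, Fin.ext_iff, Fin.val_add, Nat.add_mod, eq_comm]

lemma cyclicShift_pow_apply (k : ℕ) (i j : Fin n) :
    (cyclicShift n ^ k) i j = if i + k = j then 1 else 0 := by
  induction k generalizing j with
  | zero => simp [one_apply]
  | succ k ih =>
    rw [pow_succ, mul_apply, Finset.sum_eq_single (i + k)]
    · simp [ih, cyclicShift_apply, add_assoc]
    · intro t _ ht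
      simp [ih, Ne.symm ht]
    · simp

lemma kronecker_one_conj_apply {l m : ℕ} (R : Matrix (Fin n × Fin l) (Fin n × Fin m) ℝ)
    (k i j : Fin n) (a : Fin l) (b : Fin m) :
    (((cyclicShift n ^ (k : ℕ)) ⊗ₖ (1 : Matrix (Fin l) (Fin l) ℝ))ᵀ * R *
        ((cyclicShift n ^ (k : ℕ)) ⊗ₖ (1 : Matrix (Fin m) (Fin m) ℝ))) (i, a) (j, b)
      = R (i - k, a) (j - k, b) := by
  simp [mul_apply, cyclicShift_pow_apply, one_apply, Fintype.sum_prod_type, ← eq_sub_iff_add_eq]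

lemma sum_kronecker_apply {p m : ℕ} (b : Fin n → Matrix (Fin p) (Fin m) ℝ)
    (i j : Fin n) (a : Fin p) (c : Fin m) :
    (∑ k : Fin n, (cyclicShift n ^ (k : ℕ)) ⊗ₖ b k) (i, a) (j, c) = b (j - i) a c := by
  simp [Matrix.sum_apply, cyclicShift_pow_apply, ← eq_sub_iff_add_eq']

end CyclicShift

lemma isBlockCirculant_iff {n p m : ℕ} [NeZero n] {B : Matrix (Fin n × Fin p) (Fin n × Fin m) ℝ} :
    IsBlockCirculant B ↔
      ∃ b : Fin n → Matrix (Fin p) (Fin m) ℝ, ∀ i j a c, B (i, a) (j, c) = b (j - i) a c := by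
  refine exists_congr fun b => ⟨?_, fun h => ?_⟩
  · rintro rfl
    exact sum_kronecker_apply b
  · ext ⟨i, a⟩ ⟨j, c⟩
    rw [h, sum_kronecker_apply]

noncomputable def diagonalBlockMean {n l m : ℕ} (R : Matrix (Fin n × Fin l) (Fin n × Fin m) ℝ)
    (d : Fin n) : Matrix (Fin l) (Fin m) ℝ :=
  of fun a b => (n : ℝ)⁻¹ * ∑ i, R (i, a) (i + d, b)

lemma smul_sum_kronecker_one_conj_apply {n l m : ℕ} [NeZero n]
    (R : Matrix (Fin n × Fin l) (Fin n × Fin m) ℝ) (i j : Fin n) (a : Fin l) (b : Fin m) :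
    ((n : ℝ)⁻¹ • ∑ k : Fin n,
      ((cyclicShift n ^ (k : ℕ)) ⊗ₖ (1 : Matrix (Fin l) (Fin l) ℝ))ᵀ * R *
        ((cyclicShift n ^ (k : ℕ)) ⊗ₖ (1 : Matrix (Fin m) (Fin m) ℝ))) (i, a) (j, b)
      = diagonalBlockMean R (j - i) a b := by
  simp only [Matrix.smul_apply, Matrix.sum_apply, kronecker_one_conj_apply, smul_eq_mul,
    diagonalBlockMean, of_apply]
  congr 1
  exact Fintype.sum_equiv (Equiv.subLeft i) _ _ fun k => by
    rw [Equiv.subLeft_apply, sub_add_sub_cancel']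

lemma sum_sq_sub_mean_le {ι : Type*} [Fintype ι] (r : ι → ℝ) (t : ℝ) :
    ∑ i, ((Fintype.card ι : ℝ)⁻¹ * ∑ j, r j - r i) ^ 2 ≤ ∑ i, (t - r i) ^ 2 := by
  cases isEmpty_or_nonempty ι
  · simp
  set c := (Fintype.card ι : ℝ)⁻¹ * ∑ j, r j
  have hdev : ∑ i, (c - r i) = 0 := by
    simp [Finset.sum_sub_distrib, c]
  calc ∑ i, (c - r i) ^ 2
      ≤ ∑ i, (c - r i) ^ 2 + 2 * (t - c) * ∑ i, (c - r i) + Fintype.card ι * (t - c) ^ 2 := by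
        rw [hdev, mul_zero, add_zero]
        exact le_add_of_nonneg_right (by positivity)
    _ = ∑ i, (t - r i) ^ 2 := by
        simp only [Finset.mul_sum, ← Finset.sum_add_distrib, ← Finset.card_univ, ← nsmul_eq_mul,
          ← Finset.sum_const]
        exact Finset.sum_congr rfl fun i _ => by ring

lemma sum_prod_eq_sum_diagonals {G α β M : Type*} [AddGroup G] [Fintype G] [Fintype α]
    [Fintype β] [AddCommMonoid M] (f : G × α → G × β → M) :
    ∑ p, ∑ q, f p q = ∑ a, ∑ d, ∑ b, ∑ i, f (i, a) (i + d, b) := by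
  calc ∑ p, ∑ q, f p q = ∑ i, ∑ a, ∑ j, ∑ b, f (i, a) (j, b) := by
        simp only [Fintype.sum_prod_type]
    _ = ∑ i, ∑ a, ∑ d, ∑ b, f (i, a) (i + d, b) := by
        refine Finset.sum_congr rfl fun i _ => Finset.sum_congr rfl fun a _ => ?_
        exact (Fintype.sum_equiv (Equiv.addLeft i) _ _ fun d => rfl).symm
    _ = ∑ a, ∑ d, ∑ b, ∑ i, f (i, a) (i + d, b) := by
        rw [Finset.sum_comm]
        refine Finset.sum_congr rfl fun a _ => ?_
        rw [Finset.sum_comm]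
        refine Finset.sum_congr rfl fun d _ => ?_
        rw [Finset.sum_comm]

lemma frobNorm_sub_le_of_diagonalBlockMean {n l m : ℕ} [NeZero n]
    (R Y X : Matrix (Fin n × Fin l) (Fin n × Fin m) ℝ)
    (x : Fin n → Matrix (Fin l) (Fin m) ℝ)
    (hY : ∀ i j a b, Y (i, a) (j, b) = diagonalBlockMean R (j - i) a b)
    (hX : ∀ i j a b, X (i, a) (j, b) = x (j - i) a b) :
    frobNorm (Y - R) ≤ frobNorm (X - R) := by
  refine Real.sqrt_le_sqrt ?_
  rw [sum_prod_eq_sum_diagonals, sum_prod_eq_sum_diagonals]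
  refine Finset.sum_le_sum fun a _ => Finset.sum_le_sum fun d _ => Finset.sum_le_sum fun b _ => ?_
  simp only [Matrix.sub_apply, hY, hX, add_sub_cancel_left, diagonalBlockMean, of_apply]
  simpa using sum_sq_sub_mean_le (fun i => R (i, a) (i + d, b)) (x d a b)

theorem blockCirculant_approximation_general
    (n l m : ℕ) (hn : 0 < n)
    (R : Matrix (Fin n × Fin l) (Fin n × Fin m) ℝ)
    (Xstar : Matrix (Fin n × Fin l) (Fin n × Fin m) ℝ)
    (hXstar : Xstar = (n : ℝ)⁻¹ • ∑ k : Fin n,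
      ((cyclicShift n ^ (k : ℕ)) ⊗ₖ (1 : Matrix (Fin l) (Fin l) ℝ))ᵀ * R *
        ((cyclicShift n ^ (k : ℕ)) ⊗ₖ (1 : Matrix (Fin m) (Fin m) ℝ))) :
    IsBlockCirculant Xstar ∧
    ∀ X : Matrix (Fin n × Fin l) (Fin n × Fin m) ℝ,
      IsBlockCirculant X → frobNorm (Xstar - R) ≤ frobNorm (X - R) := by
  have : NeZero n := ⟨hn.ne'⟩
  have hXstar_apply : ∀ i j a b, Xstar (i, a) (j, b) = diagonalBlockMean R (j - i) a b := by
    subst hXstar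
    exact smul_sum_kronecker_one_conj_apply R
  refine ⟨isBlockCirculant_iff.2 ⟨_, hXstar_apply⟩, fun X hX => ?_⟩
  obtain ⟨x, hx⟩ := isBlockCirculant_iff.1 hX
  exact frobNorm_sub_le_of_diagonalBlockMean R Xstar X x hXstar_apply hx

/-- **Optimal block-circulant approximation.** For an arbitrary matrix `R`, the matrix
`X* = (1/n)·Σ_k (Ω_n^k ⊗ I_l)ᵀ·R·(Ω_n^k ⊗ I_m)` is block-circulant and minimizes the
Frobenius-norm distance to `R` over all block-circulant matrices. -/
theorem blockCirculant_approximation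
    (n l m : ℕ) (hn : 0 < n) (hl : 0 < l) (hm : 0 < m)
    (R : Matrix (Fin n × Fin l) (Fin n × Fin m) ℝ)
    (Xstar : Matrix (Fin n × Fin l) (Fin n × Fin m) ℝ)
    (hXstar : Xstar = (n : ℝ)⁻¹ • ∑ k : Fin n,
      ((cyclicShift n ^ (k : ℕ)) ⊗ₖ (1 : Matrix (Fin l) (Fin l) ℝ))ᵀ * R *
        ((cyclicShift n ^ (k : ℕ)) ⊗ₖ (1 : Matrix (Fin m) (Fin m) ℝ))) :
    IsBlockCirculant Xstar ∧
    ∀ X : Matrix (Fin n × Fin l) (Fin n × Fin m) ℝ,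
      IsBlockCirculant X → frobNorm (Xstar - R) ≤ frobNorm (X - R) :=
  blockCirculant_approximation_general n l m hn R Xstar hXstar
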